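/- arXiv:1808.10632 — 2 statements merged into one kernel-verified Lean document; each statement's English description precedes it below -/
import Mathlib

section
/- Let n1, n2, k1, k2 be positive integers, and let W ∈ ℝ^{(n1 n2)×(k1 k2)}. Let R̃(W) ∈ ℝ^{(n1 k1)×(n2 k2)} denote the rearrangement of W (whose row indexed by the block position (i,j) is vec(W_{ij})ᵀ, where W_{ij} ∈ ℝ^{n2×k2} are the blocks of W). If rank(R̃(W)) = l, then there exist matrices L_1,…,L_l ∈ ℝ^{n1×k1} and R_1,…,R_l ∈ ℝ^{n2×k2} with W = Σ_{j=1}^{l} L_j ⊗ R_j; conversely, if W = Σ_{j=1}^{k} L_j ⊗ R_j for some k, then rank(R̃(W)) ≤ k. -/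
open Matrix Kronecker

/-!
The rearrangement `R̃` is a linear bijection sending `L ⊗ R` to the rank-one matrix
`vec(L) vec(R)ᵀ` (with `vec` reading entries row by row). Both claims therefore reduce to the fact
that the rank of a matrix is the least number of rank-one matrices summing to it.
-/

/-- The rearrangement map `R̃` sending `W ∈ ℝ^{(n1 n2) × (k1 k2)}`, partitioned into blocks
`W_{ij} ∈ ℝ^{n2 × k2}`, to the matrix in `ℝ^{(n1 k1) × (n2 k2)}` whose row indexed by `(i, j)`
is `vec(W_{ij})ᵀ`, i.e. whose `((i,j),(p,q))` entry is `(W_{ij})_{p q} = W_{(i,p),(j,q)}`. -/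
def rearrange {n1 n2 k1 k2 : ℕ}
    (W : Matrix (Fin n1 × Fin n2) (Fin k1 × Fin k2) ℝ) :
    Matrix (Fin n1 × Fin k1) (Fin n2 × Fin k2) ℝ :=
  fun ij pq => W (ij.1, pq.1) (ij.2, pq.2)

namespace Matrix

variable {ι m n R : Type*} [Fintype ι]

theorem sum_vecMulVec_eq_transpose_mul [NonUnitalNonAssocSemiring R]
    (u : ι → m → R) (v : ι → n → R) :
    ∑ i, vecMulVec (u i) (v i) = (of u)ᵀ * of v := by
  ext p q
  simp only [sum_apply, vecMulVec_apply, mul_apply, transpose_apply, of_apply]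

theorem rank_sum_vecMulVec_le [Fintype n] [CommRing R] [StrongRankCondition R]
    (u : ι → m → R) (v : ι → n → R) :
    (∑ i, vecMulVec (u i) (v i)).rank ≤ Fintype.card ι := by
  rw [sum_vecMulVec_eq_transpose_mul]
  exact (rank_mul_le_left _ _).trans (rank_le_card_width _)

theorem exists_eq_sum_vecMulVec_of_rank_eq [Finite m] [Fintype n] [Field R]
    (M : Matrix m n R) {l : ℕ} (h : M.rank = l) :
    ∃ (u : Fin l → m → R) (v : Fin l → n → R), M = ∑ j, vecMulVec (u j) (v j) := by
  rw [rank_eq_finrank_span_cols] at h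
  let b := Module.finBasisOfFinrankEq R _ h
  have hcol (q : n) : M.col q ∈ Submodule.span R (Set.range M.col) :=
    Submodule.subset_span ⟨q, rfl⟩
  refine ⟨fun j => b j, fun j q => b.repr ⟨_, hcol q⟩ j, ?_⟩
  ext p q
  have hq := congrArg (fun x : Submodule.span R (Set.range M.col) => (x : m → R) p)
    (b.sum_repr ⟨_, hcol q⟩)
  simp only [Submodule.coe_sum, Submodule.coe_smul, Finset.sum_apply, Pi.smul_apply,
    smul_eq_mul, col_apply] at hq
  simp only [sum_apply, vecMulVec_apply, ← hq, mul_comm]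

end Matrix

section Rearrange

variable {n1 n2 k1 k2 : ℕ}

theorem rearrange_injective :
    Function.Injective (rearrange : Matrix (Fin n1 × Fin n2) (Fin k1 × Fin k2) ℝ → _) := by
  intro W W' h
  ext ⟨i, p⟩ ⟨j, q⟩
  exact congrFun (congrFun h (i, j)) (p, q)

theorem rearrange_sum_kronecker {ι : Type*} [Fintype ι]
    (L : ι → Matrix (Fin n1) (Fin k1) ℝ) (R : ι → Matrix (Fin n2) (Fin k2) ℝ) :
    rearrange (∑ i, L i ⊗ₖ R i) =
      ∑ i, vecMulVec (Function.uncurry (L i)) (Function.uncurry (R i)) := by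
  ext ⟨i, j⟩ ⟨p, q⟩
  simp only [rearrange, Matrix.sum_apply, kroneckerMap_apply, vecMulVec_apply]
  rfl

end Rearrange

theorem kronecker_rank_decomposition_general
    (n1 n2 k1 k2 : ℕ)
    (W : Matrix (Fin n1 × Fin n2) (Fin k1 × Fin k2) ℝ) :
    (∀ l : ℕ, (rearrange W).rank = l →
      ∃ (L : Fin l → Matrix (Fin n1) (Fin k1) ℝ)
        (R : Fin l → Matrix (Fin n2) (Fin k2) ℝ),
        W = ∑ j : Fin l, (L j) ⊗ₖ (R j)) ∧
    (∀ (k : ℕ) (L : Fin k → Matrix (Fin n1) (Fin k1) ℝ)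
        (R : Fin k → Matrix (Fin n2) (Fin k2) ℝ),
        W = ∑ j : Fin k, (L j) ⊗ₖ (R j) → (rearrange W).rank ≤ k) := by
  refine ⟨fun l hl => ?_, fun k L R hW => ?_⟩
  · obtain ⟨u, v, huv⟩ := exists_eq_sum_vecMulVec_of_rank_eq (rearrange W) hl
    refine ⟨fun j => of (Function.curry (u j)), fun j => of (Function.curry (v j)),
      rearrange_injective ?_⟩
    rw [huv, rearrange_sum_kronecker]
    rfl
  · rw [hW, rearrange_sum_kronecker]
    exact (rank_sum_vecMulVec_le _ _).trans_eq (Fintype.card_fin k)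

/-- if `rank(R̃(W)) = l` then `W` is a sum of `l` Kronecker products
`L_j ⊗ R_j`; conversely, if `W = Σ_{j=1}^k L_j ⊗ R_j` then `rank(R̃(W)) ≤ k`. -/
theorem kronecker_rank_decomposition
    (n1 n2 k1 k2 : ℕ) (hn1 : 0 < n1) (hn2 : 0 < n2) (hk1 : 0 < k1) (hk2 : 0 < k2)
    (W : Matrix (Fin n1 × Fin n2) (Fin k1 × Fin k2) ℝ) :
    (∀ l : ℕ, (rearrange W).rank = l →
      ∃ (L : Fin l → Matrix (Fin n1) (Fin k1) ℝ)
        (R : Fin l → Matrix (Fin n2) (Fin k2) ℝ),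
        W = ∑ j : Fin l, (L j) ⊗ₖ (R j)) ∧
    (∀ (k : ℕ) (L : Fin k → Matrix (Fin n1) (Fin k1) ℝ)
        (R : Fin k → Matrix (Fin n2) (Fin k2) ℝ),
        W = ∑ j : Fin k, (L j) ⊗ₖ (R j) → (rearrange W).rank ≤ k) :=
  kronecker_rank_decomposition_general n1 n2 k1 k2 W
end

section
/- Let A_1,…,A_N ∈ ℝ^{n1×n2}. Then the infimum over all L ∈ ℝ^{n1×k1} with LᵀL = I_{k1}, all R ∈ ℝ^{n2×k2} with RᵀR = I_{k2}, and all D_1,…,D_N ∈ ℝ^{k1×k2} of Σ_{i=1}^{N} ‖A_i − L D_i Rᵀ‖_F² equals Σ_{i=1}^{N} ‖A_i‖_F² minus the supremum over orthonormal-column L, R of Σ_{i=1}^{N} ‖Lᵀ A_i R‖_F²; moreover, for any fixed orthonormal-column L, R, the optimal D_i in the minimization are given by D_i = Lᵀ A_i R. -/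
/-!
For orthonormal-column `L`, `R` the map `D ↦ L D Rᵀ` is an isometry whose adjoint is
`A ↦ Lᵀ A R`, so `A - L (Lᵀ A R) Rᵀ` is orthogonal to its range and Pythagoras gives
`‖A - L D Rᵀ‖² = ‖A‖² - ‖Lᵀ A R‖² + ‖D - Lᵀ A R‖²`.
Minimising over `D` therefore leaves `‖A‖² - ‖Lᵀ A R‖²`, attained at `D = Lᵀ A R`, and the
infimum over `L`, `R` becomes `Σ ‖A_i‖²` minus the supremum of `Σ ‖Lᵀ A_i R‖²`.
-/

open Matrix

/-- The squared Frobenius norm of a matrix. -/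
def frobSq {m n : ℕ} (M : Matrix (Fin m) (Fin n) ℝ) : ℝ :=
  ∑ i, ∑ j, (M i j) ^ 2

section Frobenius

variable {m n : ℕ}

lemma frobSq_nonneg (M : Matrix (Fin m) (Fin n) ℝ) : 0 ≤ frobSq M :=
  Finset.sum_nonneg fun _ _ => Finset.sum_nonneg fun _ _ => sq_nonneg _

lemma frobSq_eq_trace (M : Matrix (Fin m) (Fin n) ℝ) : frobSq M = (Mᵀ * M).trace := by
  simp only [frobSq, trace, diag_apply, mul_apply, transpose_apply, sq]
  exact Finset.sum_comm

lemma trace_transpose_mul_comm {l p α : Type*} [Fintype l] [Fintype p] [CommSemiring α]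
    (M P : Matrix l p α) :
    (Pᵀ * M).trace = (Mᵀ * P).trace := by
  rw [← trace_transpose, transpose_mul, transpose_transpose]

lemma frobSq_sub (M P : Matrix (Fin m) (Fin n) ℝ) :
    frobSq (M - P) = frobSq M - 2 * (Mᵀ * P).trace + frobSq P := by
  simp only [frobSq_eq_trace, transpose_sub, Matrix.sub_mul, Matrix.mul_sub, trace_sub,
    trace_transpose_mul_comm M P]
  ring

end Frobenius

lemma transpose_mul_self_one_submatrix {l m α : Type*} [Fintype m] [DecidableEq l]
    [DecidableEq m] [NonAssocSemiring α] {e : l → m} (he : Function.Injective e) :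
    ((1 : Matrix m m α).submatrix id e)ᵀ * (1 : Matrix m m α).submatrix id e = 1 := by
  rw [transpose_submatrix, transpose_one, ← submatrix_mul _ _ _ _ _ Function.bijective_id,
    Matrix.mul_one, submatrix_one e he]

section Sandwich

variable {n1 n2 k1 k2 : ℕ} {L : Matrix (Fin n1) (Fin k1) ℝ} {R : Matrix (Fin n2) (Fin k2) ℝ}

lemma trace_transpose_mul_sandwich (A : Matrix (Fin n1) (Fin n2) ℝ)
    (D : Matrix (Fin k1) (Fin k2) ℝ) :
    (Aᵀ * (L * D * Rᵀ)).trace = ((Lᵀ * A * R)ᵀ * D).trace := by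
  rw [show Aᵀ * (L * D * Rᵀ) = Aᵀ * L * D * Rᵀ by simp only [Matrix.mul_assoc],
    show (Lᵀ * A * R)ᵀ * D = Rᵀ * (Aᵀ * L * D) by
      simp only [transpose_mul, transpose_transpose, Matrix.mul_assoc],
    trace_mul_comm]

lemma frobSq_sandwich (hL : Lᵀ * L = 1) (hR : Rᵀ * R = 1) (D : Matrix (Fin k1) (Fin k2) ℝ) :
    frobSq (L * D * Rᵀ) = frobSq D := by
  have h : (L * D * Rᵀ)ᵀ * (L * D * Rᵀ) = R * (Dᵀ * (Lᵀ * L) * D * Rᵀ) := by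
    simp only [transpose_mul, transpose_transpose, Matrix.mul_assoc]
  rw [frobSq_eq_trace, frobSq_eq_trace, h, hL, Matrix.mul_one, trace_mul_comm,
    Matrix.mul_assoc, hR, Matrix.mul_one]

variable (hL : Lᵀ * L = 1) (hR : Rᵀ * R = 1)
include hL hR

lemma frobSq_sub_sandwich (A : Matrix (Fin n1) (Fin n2) ℝ) (D : Matrix (Fin k1) (Fin k2) ℝ) :
    frobSq (A - L * D * Rᵀ) = frobSq A - frobSq (Lᵀ * A * R) + frobSq (D - Lᵀ * A * R) := by
  rw [frobSq_sub, frobSq_sub, frobSq_sandwich hL hR, trace_transpose_mul_sandwich,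
    trace_transpose_mul_comm]
  ring

lemma frobSq_sub_sandwich_proj (A : Matrix (Fin n1) (Fin n2) ℝ) :
    frobSq (A - L * (Lᵀ * A * R) * Rᵀ) = frobSq A - frobSq (Lᵀ * A * R) := by
  rw [frobSq_sub_sandwich hL hR, sub_self]
  simp [frobSq]

lemma frobSq_sub_le_frobSq_sub_sandwich (A : Matrix (Fin n1) (Fin n2) ℝ)
    (D : Matrix (Fin k1) (Fin k2) ℝ) :
    frobSq A - frobSq (Lᵀ * A * R) ≤ frobSq (A - L * D * Rᵀ) := by
  rw [frobSq_sub_sandwich hL hR]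
  linarith [frobSq_nonneg (D - Lᵀ * A * R)]

lemma frobSq_sub_sandwich_proj_le (A : Matrix (Fin n1) (Fin n2) ℝ)
    (D : Matrix (Fin k1) (Fin k2) ℝ) :
    frobSq (A - L * (Lᵀ * A * R) * Rᵀ) ≤ frobSq (A - L * D * Rᵀ) :=
  frobSq_sub_sandwich_proj hL hR A ▸ frobSq_sub_le_frobSq_sub_sandwich hL hR A D

lemma frobSq_transpose_mul_mul_le (A : Matrix (Fin n1) (Fin n2) ℝ) :
    frobSq (Lᵀ * A * R) ≤ frobSq A := by
  linarith [frobSq_sub_sandwich_proj hL hR A, frobSq_nonneg (A - L * (Lᵀ * A * R) * Rᵀ)]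

end Sandwich

/-- the GLRAM minimization `inf Σ_i ‖A_i − L D_i Rᵀ‖_F²` (over orthonormal-column
`L`, `R` and arbitrary `D_i`) equals `Σ_i ‖A_i‖_F²` minus the supremum of `Σ_i ‖Lᵀ A_i R‖_F²`
over orthonormal-column `L`, `R`; moreover for fixed orthonormal-column `L`, `R` the optimal
`D_i` are `D_i = Lᵀ A_i R`. -/
theorem glram_min_eq_max
    (n1 n2 k1 k2 N : ℕ) (hk1 : k1 ≤ n1) (hk2 : k2 ≤ n2)
    (A : Fin N → Matrix (Fin n1) (Fin n2) ℝ) :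
    sInf {v : ℝ | ∃ (L : Matrix (Fin n1) (Fin k1) ℝ) (R : Matrix (Fin n2) (Fin k2) ℝ)
        (D : Fin N → Matrix (Fin k1) (Fin k2) ℝ), Lᵀ * L = 1 ∧ Rᵀ * R = 1 ∧
        v = ∑ i, frobSq (A i - L * D i * Rᵀ)} =
      (∑ i, frobSq (A i)) -
        sSup {v : ℝ | ∃ (L : Matrix (Fin n1) (Fin k1) ℝ) (R : Matrix (Fin n2) (Fin k2) ℝ),
          Lᵀ * L = 1 ∧ Rᵀ * R = 1 ∧ v = ∑ i, frobSq (Lᵀ * A i * R)} ∧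
    ∀ (L : Matrix (Fin n1) (Fin k1) ℝ) (R : Matrix (Fin n2) (Fin k2) ℝ),
      Lᵀ * L = 1 → Rᵀ * R = 1 →
      ∀ D : Fin N → Matrix (Fin k1) (Fin k2) ℝ,
        ∑ i, frobSq (A i - L * (Lᵀ * A i * R) * Rᵀ) ≤
          ∑ i, frobSq (A i - L * D i * Rᵀ) := by
  refine ⟨?_, fun L R hL hR D =>
    Finset.sum_le_sum fun i _ => frobSq_sub_sandwich_proj_le hL hR (A i) (D i)⟩
  set S := {v : ℝ | ∃ (L : Matrix (Fin n1) (Fin k1) ℝ) (R : Matrix (Fin n2) (Fin k2) ℝ),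
    Lᵀ * L = 1 ∧ Rᵀ * R = 1 ∧ v = ∑ i, frobSq (Lᵀ * A i * R)}
  have hS : S.Nonempty := ⟨_, _, _, transpose_mul_self_one_submatrix (Fin.castLE_injective hk1),
    transpose_mul_self_one_submatrix (Fin.castLE_injective hk2), rfl⟩
  have hSbdd : BddAbove S := ⟨∑ i, frobSq (A i), by
    rintro _ ⟨L, R, hL, hR, rfl⟩
    exact Finset.sum_le_sum fun i _ => frobSq_transpose_mul_mul_le hL hR (A i)⟩
  rw [Antitone.map_csSup_of_continuousAt (continuous_sub_left _).continuousAt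
    (fun _ _ h => sub_le_sub_left h _) hS hSbdd]
  apply csInf_eq_csInf_of_forall_exists_le
  · rintro _ ⟨L, R, D, hL, hR, rfl⟩
    refine ⟨_, ⟨_, ⟨L, R, hL, hR, rfl⟩, rfl⟩, ?_⟩
    beta_reduce
    rw [← Finset.sum_sub_distrib]
    exact Finset.sum_le_sum fun i _ => frobSq_sub_le_frobSq_sub_sandwich hL hR (A i) (D i)
  · rintro _ ⟨_, ⟨L, R, hL, hR, rfl⟩, rfl⟩
    refine ⟨_, ⟨L, R, fun i => Lᵀ * A i * R, hL, hR, rfl⟩, le_of_eq ?_⟩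
    beta_reduce
    rw [← Finset.sum_sub_distrib]
    exact Finset.sum_congr rfl fun i _ => frobSq_sub_sandwich_proj hL hR (A i)
end
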